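/- Let h be a nondegenerate σ-hermitian form on the finite-dimensional K-vector space V, and let h₂ be a map ⋀²V × ⋀²V → K that is additive in each argument, K-linear in the first argument, σ-semilinear in the second, and satisfies h₂(x₁ ∧ x₂, y₁ ∧ y₂) = h(x₁,y₁)·h(x₂,y₂) − h(x₁,y₂)·h(x₂,y₁) for all x₁, x₂, y₁, y₂ ∈ V. Then h₂ is nondegenerate on ⋀²V: if h₂(u, v) = 0 for all v ∈ ⋀²V, then u = 0. -/

import Mathlib

open ExteriorAlgebra

/-- The second exterior power of `V`, realized as the submodule of the exterior algebra
spanned by all products `ι x * ι y`. -/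
def degTwo (K V : Type*) [Field K] [AddCommGroup V] [Module K V] :
    Submodule K (ExteriorAlgebra K V) :=
  Submodule.span K {z : ExteriorAlgebra K V | ∃ x y : V, z = ι K x * ι K y}

/-- The canonical alternating map `V × V → ⋀²V`, `(x, y) ↦ x ∧ y`. -/
def wedge (K V : Type*) [Field K] [AddCommGroup V] [Module K V] (x y : V) :
    degTwo K V :=
  ⟨ι K x * ι K y, Submodule.subset_span ⟨x, y, rfl⟩⟩

/-! Nondegeneracy of `h` on the finite-dimensional space `V` makes every linear form on `V`
of the shape `h(·, y)`. By the defining formula, `h₂(·, y₁ ∧ y₂)` is then the determinant pairing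
of `⋀²V` with `φ₁ ∧ φ₂` for arbitrary linear forms `φ₁, φ₂`, and these pairings separate the
points of `⋀²V`: taken against the dual basis of a basis `(bᵢ)`, they are the coordinates in the
basis `(bᵢ ∧ bⱼ)_{i < j}`. -/

namespace LinearMap

variable {K V₁ V₂ : Type*} [Field K] [AddCommGroup V₁] [Module K V₁] [AddCommGroup V₂]
  [Module K V₂] {σ : K →+* K} [RingHomSurjective σ]

theorem flip_surjective_of_injective [FiniteDimensional K V₁] {B : V₁ →ₗ[K] V₂ →ₛₗ[σ] K}
    (hB : Function.Injective B) : Function.Surjective B.flip := by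
  have hco : (range B.flip).dualCoannihilator = ⊥ := by
    refine (Submodule.eq_bot_iff _).2 fun x hx => hB.eq_iff' (map_zero B) |>.1 <| ext fun y => ?_
    exact (Submodule.mem_dualCoannihilator x).1 hx _ (mem_range_self B.flip y)
  rw [← range_eq_top, ← Subspace.dualCoannihilator_dualAnnihilator_eq (W := range B.flip), hco,
    Submodule.dualAnnihilator_bot]

end LinearMap

theorem exteriorPower.eq_zero_of_forall_alternatingMapToDual_eq_zero {R M : Type*} [CommRing R]
    [AddCommGroup M] [Module R M] [Module.Free R M] {n : ℕ} {w : ⋀[R]^n M}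
    (hw : ∀ f : Fin n → Module.Dual R M, alternatingMapToDual R M n f w = 0) : w = 0 := by
  classical
  let b := Module.Free.chooseBasis R M
  let _ : LinearOrder (Module.Free.ChooseBasisIndex R M) := linearOrderOfSTO WellOrderingRel
  refine (b.exteriorPower n).repr.injective <| Finsupp.ext fun s => ?_
  rw [basis_repr_apply, ιMultiDual, ιMulti_family, pairingDual,
    alternatingMapLinearEquiv_apply_ιMulti]
  simp [hw]

section degTwo

variable (K V : Type*) [Field K] [AddCommGroup V] [Module K V]

theorem degTwo_eq_exteriorPower : degTwo K V = ⋀[K]^2 V := by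
  rw [degTwo, ← exteriorPower.ιMulti_span_fixedDegree]
  congr 1
  ext z
  constructor
  · rintro ⟨x, y, rfl⟩
    exact ⟨![x, y], by simp [ιMulti_apply, Matrix.vecTail]⟩
  · rintro ⟨v, rfl⟩
    exact ⟨v 0, v 1, by simp [ιMulti_apply, Matrix.vecTail]⟩

def degTwoEquivExteriorPower : degTwo K V ≃ₗ[K] ⋀[K]^2 V :=
  LinearEquiv.ofEq _ _ (degTwo_eq_exteriorPower K V)

variable {K V}

theorem degTwoEquivExteriorPower_symm_ιMulti (v : Fin 2 → V) :
    (degTwoEquivExteriorPower K V).symm (exteriorPower.ιMulti K 2 v) = wedge K V (v 0) (v 1) :=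
  Subtype.ext <| by simp [degTwoEquivExteriorPower, wedge, ιMulti_apply, Matrix.vecTail]

theorem degTwo_linearMap_eq_of_wedge {P : degTwo K V →ₗ[K] K} {φ : Fin 2 → Module.Dual K V}
    (hP : ∀ x₁ x₂, P (wedge K V x₁ x₂) = φ 0 x₁ * φ 1 x₂ - φ 1 x₁ * φ 0 x₂) :
    P = (exteriorPower.alternatingMapToDual K V 2 φ).comp
      (degTwoEquivExteriorPower K V).toLinearMap := by
  rw [← LinearEquiv.comp_toLinearMap_symm_eq]
  ext v
  simp [degTwoEquivExteriorPower_symm_ιMulti, hP, Matrix.det_fin_two]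

end degTwo

theorem induced_form_on_exterior_square_nondegenerate_general
    (K V : Type*) [Field K] [AddCommGroup V] [Module K V] [FiniteDimensional K V]
    (σ : K ≃+* K)
    (h : V → V → K)
    (hadd₁ : ∀ x x' y, h (x + x') y = h x y + h x' y)
    (hadd₂ : ∀ x y y', h x (y + y') = h x y + h x y')
    (hsmul : ∀ (a b : K) (x y : V), h (a • x) (b • y) = a * σ b * h x y)
    (hnondeg : ∀ x, (∀ y, h x y = 0) → x = 0)
    (h₂ : degTwo K V → degTwo K V → K)
    (h₂add₁ : ∀ u u' v, h₂ (u + u') v = h₂ u v + h₂ u' v)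
    (h₂smul₁ : ∀ (a : K) (u v : degTwo K V), h₂ (a • u) v = a * h₂ u v)
    (h₂wedge : ∀ x₁ x₂ y₁ y₂ : V, h₂ (wedge K V x₁ x₂) (wedge K V y₁ y₂) =
      h x₁ y₁ * h x₂ y₂ - h x₁ y₂ * h x₂ y₁) :
    ∀ u : degTwo K V, (∀ v : degTwo K V, h₂ u v = 0) → u = 0 := by
  intro u hu
  let B : V →ₗ[K] V →ₛₗ[(σ : K →+* K)] K := LinearMap.mk₂'ₛₗ _ _ h hadd₁
    (fun a x y => by simpa using hsmul a 1 x y) hadd₂ (fun b x y => by simpa using hsmul 1 b x y)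
  have hB : Function.Injective B := (injective_iff_map_eq_zero B).2 fun x hx =>
    hnondeg x fun y => LinearMap.congr_fun hx y
  have hpair : ∀ y₁ y₂ w, h₂ w (wedge K V y₁ y₂) = exteriorPower.alternatingMapToDual K V 2
      ![B.flip y₁, B.flip y₂] (degTwoEquivExteriorPower K V w) := by
    intro y₁ y₂
    let P : degTwo K V →ₗ[K] K := ⟨⟨(h₂ · (wedge K V y₁ y₂)), (h₂add₁ · · _)⟩, (h₂smul₁ · · _)⟩
    refine LinearMap.congr_fun (degTwo_linearMap_eq_of_wedge (P := P) fun x₁ x₂ => ?_)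
    simp [P, B, h₂wedge]
  refine (degTwoEquivExteriorPower K V).map_eq_zero_iff.1 <|
    exteriorPower.eq_zero_of_forall_alternatingMapToDual_eq_zero fun φ => ?_
  obtain ⟨y₁, hy₁⟩ := LinearMap.flip_surjective_of_injective hB (φ 0)
  obtain ⟨y₂, hy₂⟩ := LinearMap.flip_surjective_of_injective hB (φ 1)
  have hφ : φ = ![B.flip y₁, B.flip y₂] := by ext i : 1; fin_cases i <;> simp [hy₁, hy₂]
  rw [hφ, ← hpair, hu]

/-- If `h` is a nondegenerate σ-hermitian form on `V`, then the induced form `h₂`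
on `⋀²V` is nondegenerate. -/
theorem induced_form_on_exterior_square_nondegenerate
    (K V : Type*) [Field K] [AddCommGroup V] [Module K V] [FiniteDimensional K V]
    (hchar : (2 : K) ≠ 0)
    (σ : K ≃+* K) (hσ : ∀ a, σ (σ a) = a)
    (h : V → V → K)
    (hadd₁ : ∀ x x' y, h (x + x') y = h x y + h x' y)
    (hadd₂ : ∀ x y y', h x (y + y') = h x y + h x y')
    (hsmul : ∀ (a b : K) (x y : V), h (a • x) (b • y) = a * σ b * h x y)
    (hherm : ∀ x y, h x y = σ (h y x))
    (hnondeg : ∀ x, (∀ y, h x y = 0) → x = 0)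
    (h₂ : degTwo K V → degTwo K V → K)
    (h₂add₁ : ∀ u u' v, h₂ (u + u') v = h₂ u v + h₂ u' v)
    (h₂add₂ : ∀ u v v', h₂ u (v + v') = h₂ u v + h₂ u v')
    (h₂smul₁ : ∀ (a : K) (u v : degTwo K V), h₂ (a • u) v = a * h₂ u v)
    (h₂smul₂ : ∀ (b : K) (u v : degTwo K V), h₂ u (b • v) = σ b * h₂ u v)
    (h₂wedge : ∀ x₁ x₂ y₁ y₂ : V, h₂ (wedge K V x₁ x₂) (wedge K V y₁ y₂) =
      h x₁ y₁ * h x₂ y₂ - h x₁ y₂ * h x₂ y₁) :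
    ∀ u : degTwo K V, (∀ v : degTwo K V, h₂ u v = 0) → u = 0 :=
  induced_form_on_exterior_square_nondegenerate_general K V σ h hadd₁ hadd₂ hsmul hnondeg h₂ h₂add₁
    h₂smul₁ h₂wedge
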